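/- For all real numbers γ, β ≥ 0, the quantity H(γ, β, n) := g(β, n)·A(γ, n) + Q(γ, n) is bounded between the linear and quadratic orders: H(γ, β, n) = Ω(n) and H(γ, β, n) = O(n²); that is, there exist constants 0 < c₁ ≤ c₂ and N₀ such that c₁·n ≤ H(γ, β, n) ≤ c₂·n² for all n ≥ N₀. -/
import Mathlib


/-- Zipf normalization `Z(γ, n) = Σ_{j=1}^{n−1} j^{−γ}`. -/
noncomputable def Z (γ : ℝ) (n : ℕ) : ℝ := ∑ j ∈ Finset.Icc 1 (n - 1), (j : ℝ) ^ (-γ)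

/-- `Q(γ, n) = n·Z(γ, n)⁻¹·Σ_{l=1}^{n−1} l^{1−γ}`. -/
noncomputable def Q (γ : ℝ) (n : ℕ) : ℝ :=
  n * (Z γ n)⁻¹ * ∑ l ∈ Finset.Icc 1 (n - 1), (l : ℝ) ^ (1 - γ)

/-- `A(γ, n) = n·Z(γ, n)⁻¹·Σ_{l=1}^{n−1} l^{1/2−γ}`. -/
noncomputable def A (γ : ℝ) (n : ℕ) : ℝ :=
  n * (Z γ n)⁻¹ * ∑ l ∈ Finset.Icc 1 (n - 1), (l : ℝ) ^ (1 / 2 - γ)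

/-- `g(β, n)`: `1` if `β > 2`; `log n` if `β = 2`; `n^{1−β/2}` if `1 < β < 2`;
`√(n/log n)` if `β = 1`; `√n` if `0 ≤ β < 1`. -/
noncomputable def g (β : ℝ) (n : ℕ) : ℝ :=
  if 2 < β then 1
  else if β = 2 then Real.log n
  else if 1 < β then (n : ℝ) ^ (1 - β / 2)
  else if β = 1 then Real.sqrt ((n : ℝ) / Real.log n)
  else Real.sqrt n

/-- `H(γ, β, n) = g(β, n)·A(γ, n) + Q(γ, n)`. -/
noncomputable def H (γ β : ℝ) (n : ℕ) : ℝ := g β n * A γ n + Q γ n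

lemma g_nonneg (β : ℝ) (n : ℕ) (hn : 1 ≤ n) : 0 ≤ g β n := by
  have h1 : (1:ℝ) ≤ n := by exact_mod_cast hn
  unfold g
  split_ifs
  · norm_num
  · exact Real.log_nonneg h1
  · exact Real.rpow_nonneg (by linarith) _
  · exact Real.sqrt_nonneg _
  · exact Real.sqrt_nonneg _

lemma g_le (β : ℝ) (n : ℕ) (hβ : 0 ≤ β) (hn : 3 ≤ n) : g β n ≤ 2 * Real.sqrt n := by
  have h3 : (3:ℝ) ≤ n := by exact_mod_cast hn
  have h1 : (1:ℝ) ≤ n := by linarith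
  have hs1 : (1:ℝ) ≤ Real.sqrt n := by
    rw [show (1:ℝ) = Real.sqrt 1 by simp]
    exact Real.sqrt_le_sqrt h1
  have hsnn : (0:ℝ) ≤ Real.sqrt n := Real.sqrt_nonneg _
  unfold g
  split_ifs with h2 he2 h12 he1
  · linarith
  · -- log n ≤ 2 √n
    have hlog : Real.log (Real.sqrt n) ≤ Real.sqrt n - 1 :=
      Real.log_le_sub_one_of_pos (by linarith)
    have : Real.log n = 2 * Real.log (Real.sqrt n) := by
      rw [Real.log_sqrt (by linarith)]; ring
    linarith
  · -- n^{1-β/2} ≤ √n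
    have : (n:ℝ) ^ (1 - β/2) ≤ (n:ℝ) ^ ((1:ℝ)/2) :=
      Real.rpow_le_rpow_of_exponent_le h1 (by linarith)
    have hsq : Real.sqrt (n:ℝ) = (n:ℝ) ^ ((1:ℝ)/2) := Real.sqrt_eq_rpow _
    have hnn : (0:ℝ) ≤ (n:ℝ) ^ ((1:ℝ)/2) := Real.rpow_nonneg (by linarith) _
    rw [hsq]
    linarith
  · -- √(n / log n) ≤ 2 √n
    have hlog1 : (1:ℝ) ≤ Real.log n := by
      rw [Real.le_log_iff_exp_le (by linarith)]
      have := Real.exp_one_lt_d9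
      linarith
    have : (n:ℝ) / Real.log n ≤ n := div_le_self (by linarith) hlog1
    have := Real.sqrt_le_sqrt this
    linarith
  · linarith

theorem social_broadcast_transport_complexity_range (γ β : ℝ) (hγ : 0 ≤ γ) (hβ : 0 ≤ β) :
    ∃ c₁ c₂ : ℝ, 0 < c₁ ∧ c₁ ≤ c₂ ∧ ∃ N₀ : ℕ, ∀ n : ℕ, N₀ ≤ n →
      c₁ * n ≤ H γ β n ∧ H γ β n ≤ c₂ * (n : ℝ) ^ 2 := by
  refine ⟨1, 3, one_pos, by norm_num, 3, ?_⟩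
  intro n hn
  have hn3 : (3:ℝ) ≤ n := by exact_mod_cast hn
  have hn0 : (0:ℝ) < n := by linarith
  have h1n : 1 ≤ n - 1 := by omega
  have hmem : ∀ l ∈ Finset.Icc 1 (n-1), (1:ℝ) ≤ (l:ℝ) ∧ (l:ℝ) ≤ n := by
    intro l hl
    rw [Finset.mem_Icc] at hl
    refine ⟨by exact_mod_cast hl.1, ?_⟩
    have : l ≤ n := le_trans hl.2 (Nat.sub_le n 1)
    exact_mod_cast this
  have hZ1 : 1 ≤ Z γ n := by
    have h1mem : 1 ∈ Finset.Icc 1 (n-1) := Finset.mem_Icc.mpr ⟨le_refl _, h1n⟩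
    have := Finset.single_le_sum (f := fun j : ℕ => (j:ℝ)^(-γ))
      (fun i _ => Real.rpow_nonneg (Nat.cast_nonneg i) _) h1mem
    simpa [Z, Real.one_rpow] using this
  have hZpos : 0 < Z γ n := lt_of_lt_of_le one_pos hZ1
  -- lower bound on S1 = Σ l^{1-γ}
  have hS1low : Z γ n ≤ ∑ l ∈ Finset.Icc 1 (n-1), (l:ℝ) ^ (1 - γ) := by
    apply Finset.sum_le_sum
    intro l hl
    exact Real.rpow_le_rpow_of_exponent_le (hmem l hl).1 (by linarith)
  -- upper bound on S1
  have hS1up : ∑ l ∈ Finset.Icc 1 (n-1), (l:ℝ) ^ (1 - γ) ≤ n * Z γ n := by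
    rw [Z, Finset.mul_sum]
    apply Finset.sum_le_sum
    intro l hl
    obtain ⟨hl1, hln⟩ := hmem l hl
    have hlpos : (0:ℝ) < l := by linarith
    have : (l:ℝ) ^ (1 - γ) = (l:ℝ) * (l:ℝ) ^ (-γ) := by
      rw [show (1:ℝ) - γ = 1 + (-γ) by ring, Real.rpow_add hlpos, Real.rpow_one]
    rw [this]
    exact mul_le_mul_of_nonneg_right hln (Real.rpow_nonneg hlpos.le _)
  -- upper bound on SA = Σ l^{1/2-γ}
  have hSAup : ∑ l ∈ Finset.Icc 1 (n-1), (l:ℝ) ^ (1/2 - γ) ≤ Real.sqrt n * Z γ n := by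
    rw [Z, Finset.mul_sum]
    apply Finset.sum_le_sum
    intro l hl
    obtain ⟨hl1, hln⟩ := hmem l hl
    have hlpos : (0:ℝ) < l := by linarith
    have heq : (l:ℝ) ^ ((1:ℝ)/2 - γ) = (l:ℝ) ^ ((1:ℝ)/2) * (l:ℝ) ^ (-γ) := by
      rw [show (1:ℝ)/2 - γ = 1/2 + (-γ) by ring, Real.rpow_add hlpos]
    have hhalf : (l:ℝ) ^ ((1:ℝ)/2) ≤ Real.sqrt n := by
      rw [Real.sqrt_eq_rpow]
      exact Real.rpow_le_rpow hlpos.le hln (by norm_num)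
    rw [heq]
    exact mul_le_mul_of_nonneg_right hhalf (Real.rpow_nonneg hlpos.le _)
  have hZinv : (0:ℝ) < (Z γ n)⁻¹ := inv_pos.mpr hZpos
  -- Q bounds
  have hQlow : (n:ℝ) ≤ Q γ n := by
    have : (n:ℝ) * (Z γ n)⁻¹ * Z γ n ≤ Q γ n := by
      unfold Q
      exact mul_le_mul_of_nonneg_left hS1low (by positivity)
    rwa [mul_assoc, inv_mul_cancel₀ hZpos.ne', mul_one] at this
  have hQup : Q γ n ≤ (n:ℝ) ^ 2 := by
    have : Q γ n ≤ (n:ℝ) * (Z γ n)⁻¹ * (n * Z γ n) := by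
      unfold Q
      exact mul_le_mul_of_nonneg_left hS1up (by positivity)
    calc Q γ n ≤ (n:ℝ) * (Z γ n)⁻¹ * (n * Z γ n) := this
      _ = (n:ℝ)^2 * ((Z γ n)⁻¹ * Z γ n) := by ring
      _ = (n:ℝ)^2 := by rw [inv_mul_cancel₀ hZpos.ne', mul_one]
  -- A bounds
  have hAnn : 0 ≤ A γ n := by
    unfold A
    have : 0 ≤ ∑ l ∈ Finset.Icc 1 (n-1), (l:ℝ) ^ (1/2 - γ) :=
      Finset.sum_nonneg fun l _ => Real.rpow_nonneg (Nat.cast_nonneg l) _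
    positivity
  have hAup : A γ n ≤ (n:ℝ) * Real.sqrt n := by
    have : A γ n ≤ (n:ℝ) * (Z γ n)⁻¹ * (Real.sqrt n * Z γ n) := by
      unfold A
      exact mul_le_mul_of_nonneg_left hSAup (by positivity)
    calc A γ n ≤ (n:ℝ) * (Z γ n)⁻¹ * (Real.sqrt n * Z γ n) := this
      _ = (n:ℝ) * Real.sqrt n * ((Z γ n)⁻¹ * Z γ n) := by ring
      _ = (n:ℝ) * Real.sqrt n := by rw [inv_mul_cancel₀ hZpos.ne', mul_one]
  have hgn : 0 ≤ g β n := g_nonneg β n (by omega)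
  have hgle : g β n ≤ 2 * Real.sqrt n := g_le β n hβ hn
  have hsq : Real.sqrt n * Real.sqrt n = n := Real.mul_self_sqrt hn0.le
  have hgA : g β n * A γ n ≤ 2 * (n:ℝ)^2 := by
    calc g β n * A γ n ≤ (2 * Real.sqrt n) * ((n:ℝ) * Real.sqrt n) :=
          mul_le_mul hgle hAup hAnn (by positivity)
      _ = 2 * (n:ℝ) * (Real.sqrt n * Real.sqrt n) := by ring
      _ = 2 * (n:ℝ)^2 := by rw [hsq]; ring
  constructor
  · have : (0:ℝ) ≤ g β n * A γ n := mul_nonneg hgn hAnn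
    unfold H
    linarith
  · unfold H
    linarith
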